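/- Among all matrices in SO(3), the minimizer of R ↦ ‖Ψ − R‖_F² for Ψ ∈ ℝ^{3×3} with SVD Ψ = U Σ Vᵀ (Σ with nonincreasing nonnegative diagonal) is R* = U D Vᵀ with D = diag(1,1,det(UVᵀ)), provided the singular values satisfy σ₂ + det(UVᵀ)·σ₃ > 0. -/
import Mathlib
open Matrix

/-- Squared Frobenius norm. -/
noncomputable def frobSq (A : Matrix (Fin 3) (Fin 3) ℝ) : ℝ :=
  ∑ i, ∑ j, (A i j) ^ 2

lemma diag_le_one (Q : Matrix (Fin 3) (Fin 3) ℝ) (h : Q * Qᵀ = 1) (i : Fin 3) :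
    Q i i ≤ 1 ∧ -1 ≤ Q i i := by
  have hsum : ∑ j, Q i j * Q i j = 1 := by
    have h1 := congrFun (congrFun h i) i
    simpa [Matrix.mul_apply, Matrix.transpose_apply] using h1
  have hsq : Q i i * Q i i ≤ 1 := by
    rw [← hsum]
    exact Finset.single_le_sum (fun j _ => mul_self_nonneg (Q i j)) (Finset.mem_univ i)
  constructor <;> nlinarith [hsq]

lemma trace_le_of_det_neg (Q : Matrix (Fin 3) (Fin 3) ℝ) (h : Qᵀ * Q = 1)
    (hdet : Q.det = -1) : Q 0 0 + Q 1 1 + Q 2 2 ≤ 1 := by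
  have h' : Q * Qᵀ = 1 := mul_eq_one_comm.mp h
  have hadj : Q.adjugate = -Qᵀ := by
    have h1 : Q * Q.adjugate = Q.det • (1 : Matrix (Fin 3) (Fin 3) ℝ) := Matrix.mul_adjugate Q
    rw [hdet] at h1
    have h2 : Q * (-Qᵀ) = (-1 : ℝ) • (1 : Matrix (Fin 3) (Fin 3) ℝ) := by
      rw [Matrix.mul_neg, h']; simp
    calc Q.adjugate = (Qᵀ * Q) * Q.adjugate := by rw [h, Matrix.one_mul]
    _ = Qᵀ * (Q * Q.adjugate) := by rw [Matrix.mul_assoc]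
    _ = Qᵀ * (Q * (-Qᵀ)) := by rw [h1, h2]
    _ = (Qᵀ * Q) * (-Qᵀ) := by rw [Matrix.mul_assoc]
    _ = -Qᵀ := by rw [h, Matrix.one_mul]
  have e0 := congrFun (congrFun hadj 0) 0
  have e1 := congrFun (congrFun hadj 1) 1
  have e2 := congrFun (congrFun hadj 2) 2
  simp [Matrix.adjugate_fin_three, Matrix.transpose_apply] at e0 e1 e2
  have c0 := congrFun (congrFun h' 0) 0
  have c1 := congrFun (congrFun h' 1) 1
  have c2 := congrFun (congrFun h' 2) 2
  simp [Matrix.mul_apply, Fin.sum_univ_three, Matrix.one_apply, Matrix.transpose_apply] at c0 c1 c2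
  nlinarith [sq_nonneg (Q 1 0 - Q 0 1), sq_nonneg (Q 2 0 - Q 0 2), sq_nonneg (Q 2 1 - Q 1 2),
    sq_nonneg (1 - (Q 0 0 + Q 1 1 + Q 2 2)), e0, e1, e2, c0, c1, c2]

lemma key_ineq (σ : Fin 3 → ℝ) (hσ0 : ∀ i, 0 ≤ σ i) (hσa : Antitone σ)
    (Q : Matrix (Fin 3) (Fin 3) ℝ) (hQ : Qᵀ * Q = 1) (δ : ℝ) (hdet : Q.det = δ)
    (hδ : δ = 1 ∨ δ = -1) :
    σ 0 * Q 0 0 + σ 1 * Q 1 1 + σ 2 * Q 2 2 ≤ σ 0 + σ 1 + σ 2 * δ := by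
  have hQ' : Q * Qᵀ = 1 := mul_eq_one_comm.mp hQ
  have hd0 := diag_le_one Q hQ' 0
  have hd1 := diag_le_one Q hQ' 1
  have hd2 := diag_le_one Q hQ' 2
  have h01 : σ 1 ≤ σ 0 := hσa (by decide : (0 : Fin 3) ≤ 1)
  have h12 : σ 2 ≤ σ 1 := hσa (by decide : (1 : Fin 3) ≤ 2)
  rcases hδ with hδ | hδ
  · subst hδ
    nlinarith [mul_nonneg (hσ0 0) (sub_nonneg.2 hd0.1), mul_nonneg (hσ0 1) (sub_nonneg.2 hd1.1),
      mul_nonneg (hσ0 2) (sub_nonneg.2 hd2.1)]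
  · subst hδ
    have htr : Q 0 0 + Q 1 1 + Q 2 2 ≤ 1 := trace_le_of_det_neg Q hQ hdet
    nlinarith [mul_nonneg (sub_nonneg.2 h01) (sub_nonneg.2 hd0.1),
      mul_nonneg (hσ0 1) (sub_nonneg.2 htr),
      mul_nonneg (sub_nonneg.2 h12) (by linarith [hd2.2] : (0:ℝ) ≤ 1 + Q 2 2)]

lemma frobSq_eq_trace (A : Matrix (Fin 3) (Fin 3) ℝ) : frobSq A = Matrix.trace (Aᵀ * A) := by
  simp only [frobSq, Matrix.trace, Matrix.diag, Matrix.mul_apply, Matrix.transpose_apply, sq]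
  exact Finset.sum_comm

/-- SO(3) projection as Frobenius-nearest rotation: if Ψ = U Σ Vᵀ is an SVD
(Σ diagonal with nonincreasing nonnegative entries) and
σ₂ + det(UVᵀ)·σ₃ > 0, then R* = U D Vᵀ with D = diag(1,1,det(UVᵀ)) minimizes
R ↦ ‖Ψ − R‖_F² over SO(3). -/
theorem stmt_9 (Ψ U V : Matrix (Fin 3) (Fin 3) ℝ) (σ : Fin 3 → ℝ)
    (hU : Uᵀ * U = 1) (hU' : U * Uᵀ = 1)
    (hV : Vᵀ * V = 1) (hV' : V * Vᵀ = 1)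
    (hσ0 : ∀ i, 0 ≤ σ i) (hσa : Antitone σ)
    (hΨ : Ψ = U * Matrix.diagonal σ * Vᵀ)
    (hpos : 0 < σ 1 + (U * Vᵀ).det * σ 2) :
    let Rstar := U * Matrix.diagonal ![1, 1, (U * Vᵀ).det] * Vᵀ
    (Rstarᵀ * Rstar = 1 ∧ Rstar.det = 1) ∧
      ∀ R : Matrix (Fin 3) (Fin 3) ℝ, Rᵀ * R = 1 → R.det = 1 →
        frobSq (Ψ - Rstar) ≤ frobSq (Ψ - R) := by
  intro Rstar
  have hRdef : Rstar = U * Matrix.diagonal ![1, 1, (U * Vᵀ).det] * Vᵀ := rfl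
  set δ : ℝ := (U * Vᵀ).det with hδdef
  have hdetU2 : U.det * U.det = 1 := by
    have h := congrArg Matrix.det hU
    rwa [Matrix.det_mul, Matrix.det_transpose, Matrix.det_one] at h
  have hdetV2 : V.det * V.det = 1 := by
    have h := congrArg Matrix.det hV
    rwa [Matrix.det_mul, Matrix.det_transpose, Matrix.det_one] at h
  have hδeq : δ = U.det * V.det := by
    rw [hδdef, Matrix.det_mul, Matrix.det_transpose]
  have hδ2 : δ * δ = 1 := by
    have h : δ * δ = (U.det * U.det) * (V.det * V.det) := by rw [hδeq]; ring
    rw [hdetU2, hdetV2, one_mul] at h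
    exact h
  have hδcases : δ = 1 ∨ δ = -1 := by
    have h : (δ - 1) * (δ + 1) = 0 := by linear_combination hδ2
    rcases mul_eq_zero.mp h with h | h
    · left; linarith
    · right; linarith
  set D : Matrix (Fin 3) (Fin 3) ℝ := Matrix.diagonal ![1, 1, δ] with hDdef
  have hDT : Dᵀ = D := Matrix.diagonal_transpose _
  have hDD : D * D = 1 := by
    rw [hDdef, Matrix.diagonal_mul_diagonal]
    rw [show (fun i => ![1, 1, δ] i * ![1, 1, δ] i) = fun _ => (1:ℝ) from
      funext fun i => by fin_cases i <;> simp [hδ2], Matrix.diagonal_one]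
  -- Rstar orthogonal
  have hRstarT : Rstarᵀ = V * (D * Uᵀ) := by
    rw [hRdef, Matrix.transpose_mul, Matrix.transpose_mul, Matrix.transpose_transpose, hDT]
  have hRo : Rstarᵀ * Rstar = 1 := by
    rw [hRstarT, hRdef]
    calc V * (D * Uᵀ) * (U * D * Vᵀ)
        = V * (D * ((Uᵀ * U) * (D * Vᵀ))) := by simp only [Matrix.mul_assoc]
    _ = V * ((D * D) * Vᵀ) := by rw [hU, Matrix.one_mul, Matrix.mul_assoc]
    _ = V * Vᵀ := by rw [hDD, Matrix.one_mul]
    _ = 1 := hV'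
  have hRdet : Rstar.det = 1 := by
    rw [hRdef, Matrix.det_mul, Matrix.det_mul, Matrix.det_transpose, Matrix.det_diagonal]
    simp only [Fin.prod_univ_three]
    simp only [Matrix.cons_val_zero, Matrix.cons_val_one, Matrix.head_cons,
      Matrix.cons_val_two, Matrix.tail_cons]
    linear_combination (-δ) * hδeq + hδ2
  refine ⟨⟨hRo, hRdet⟩, ?_⟩
  -- expansion of frobSq
  have expand : ∀ R : Matrix (Fin 3) (Fin 3) ℝ, Rᵀ * R = 1 →
      frobSq (Ψ - R) = frobSq Ψ + 3 - 2 * Matrix.trace (Ψᵀ * R) := by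
    intro R hR
    rw [frobSq_eq_trace, frobSq_eq_trace]
    rw [Matrix.transpose_sub, Matrix.sub_mul, Matrix.mul_sub, Matrix.mul_sub, hR]
    rw [Matrix.trace_sub, Matrix.trace_sub, Matrix.trace_sub]
    have h1 : Matrix.trace (Rᵀ * Ψ) = Matrix.trace (Ψᵀ * R) := by
      rw [← Matrix.trace_transpose (Rᵀ * Ψ), Matrix.transpose_mul, Matrix.transpose_transpose]
    have h2 : Matrix.trace (1 : Matrix (Fin 3) (Fin 3) ℝ) = 3 := by
      simp [Matrix.trace_one]
    rw [h1, h2]; ring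
  -- trace formula
  have traceformula : ∀ R : Matrix (Fin 3) (Fin 3) ℝ,
      Matrix.trace (Ψᵀ * R) = ∑ i, σ i * (Uᵀ * R * V) i i := by
    intro R
    have hΨT : Ψᵀ = V * (Matrix.diagonal σ * Uᵀ) := by
      rw [hΨ, Matrix.transpose_mul, Matrix.transpose_mul, Matrix.transpose_transpose,
        Matrix.diagonal_transpose]
    rw [hΨT]
    rw [Matrix.mul_assoc, Matrix.trace_mul_comm]
    have h3 : Matrix.diagonal σ * Uᵀ * R * V = Matrix.diagonal σ * (Uᵀ * R * V) := by
      simp only [Matrix.mul_assoc]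
    rw [h3]
    simp [Matrix.trace, Matrix.diag, Matrix.diagonal_mul]
  -- value at Rstar
  have hQstar : Uᵀ * Rstar * V = D := by
    rw [hRdef]
    calc Uᵀ * (U * Matrix.diagonal ![1,1,δ] * Vᵀ) * V
        = (Uᵀ * U) * (Matrix.diagonal ![1,1,δ] * (Vᵀ * V)) := by simp only [Matrix.mul_assoc]
    _ = D := by rw [hU, hV, Matrix.one_mul, Matrix.mul_one, hDdef]
  intro R hR hRdet1
  rw [expand Rstar hRo, expand R hR]
  have key : Matrix.trace (Ψᵀ * R) ≤ Matrix.trace (Ψᵀ * Rstar) := by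
    rw [traceformula R, traceformula Rstar, hQstar]
    set Q : Matrix (Fin 3) (Fin 3) ℝ := Uᵀ * R * V with hQdef
    have hQo : Qᵀ * Q = 1 := by
      rw [hQdef, Matrix.transpose_mul, Matrix.transpose_mul, Matrix.transpose_transpose]
      have hRR' : R * Rᵀ = 1 := mul_eq_one_comm.mp hR
      calc Vᵀ * (Rᵀ * U) * (Uᵀ * R * V)
          = Vᵀ * (Rᵀ * ((U * Uᵀ) * (R * V))) := by simp only [Matrix.mul_assoc]
      _ = Vᵀ * ((Rᵀ * R) * V) := by rw [hU', Matrix.one_mul, Matrix.mul_assoc]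
      _ = Vᵀ * V := by rw [hR, Matrix.one_mul]
      _ = 1 := hV
    have hQdet : Q.det = δ := by
      rw [hQdef, Matrix.det_mul, Matrix.det_mul, Matrix.det_transpose, hRdet1, hδeq]; ring
    have hDii : ∑ i, σ i * D i i = σ 0 + σ 1 + σ 2 * δ := by
      rw [hDdef]
      simp [Fin.sum_univ_three, Matrix.diagonal_apply_eq]
    rw [hDii]
    have hsum : ∑ i, σ i * Q i i = σ 0 * Q 0 0 + σ 1 * Q 1 1 + σ 2 * Q 2 2 :=
      Fin.sum_univ_three _
    rw [hsum]
    exact key_ineq σ hσ0 hσa Q hQo δ hQdet hδcases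
  linarith [key]
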